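/- arXiv:1704.05353 — 3 statements merged into one kernel-verified Lean document; each statement's English description precedes it below -/
import Mathlib

section
/- Commutator of the perturbed transport operator with a vertical derivative (Lemma 3.1, second identity): for every i ∈ {1,2,3} and every smooth f(t,x,v), [𝐓_φ, V_i] f = −(vⁱ/v⁰)·𝐞_0 f − 𝐞_i f + 𝐓(φ)·V_i f. -/
noncomputable section

/-- Phase space point `(t, x, v)`. -/
abbrev Pt : Type := ℝ × (Fin 3 → ℝ) × (Fin 3 → ℝ)

/-- `v⁰ = √(1+|v|²)`. -/
def vzero (v : Fin 3 → ℝ) : ℝ := Real.sqrt (1 + ∑ i, (v i) ^ 2)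

/-- Vertical derivative `V_i f = ∂_{vⁱ} f`. -/
def Vop (i : Fin 3) (f : Pt → ℝ) (p : Pt) : ℝ :=
  fderiv ℝ f p ((0 : ℝ), (0 : Fin 3 → ℝ), Pi.single i 1)

/-- `W f = vⁱ ∂_{vⁱ} f`. -/
def Wop (f : Pt → ℝ) (p : Pt) : ℝ := ∑ i, p.2.2 i * Vop i f p

/-- Derivative of a function of `(t,x)` in the constant spacetime direction `d`. -/
def Dphi (φ : ℝ × (Fin 3 → ℝ) → ℝ) (d : ℝ × (Fin 3 → ℝ)) (q : ℝ × (Fin 3 → ℝ)) : ℝ :=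
  fderiv ℝ φ q d

/-- `𝐓(φ) = v⁰ ∂_t φ + vⁱ ∂_{xⁱ} φ`, evaluated at a phase-space point. -/
def TphiFn (φ : ℝ × (Fin 3 → ℝ) → ℝ) (p : Pt) : ℝ :=
  vzero p.2.2 * Dphi φ ((1 : ℝ), (0 : Fin 3 → ℝ)) (p.1, p.2.1) +
    ∑ i, p.2.2 i * Dphi φ ((0 : ℝ), Pi.single i 1) (p.1, p.2.1)

/-- Free transport operator `𝐓 f = v⁰ ∂_t f + vⁱ ∂_{xⁱ} f`. -/
def Tfree (f : Pt → ℝ) (p : Pt) : ℝ :=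
  vzero p.2.2 * fderiv ℝ f p ((1 : ℝ), (0 : Fin 3 → ℝ), (0 : Fin 3 → ℝ)) +
    ∑ i, p.2.2 i * fderiv ℝ f p ((0 : ℝ), Pi.single i 1, (0 : Fin 3 → ℝ))

/-- Perturbed transport operator `𝐓_φ f = 𝐓 f − (𝐓(φ) vⁱ + ∂_{xⁱ}φ) ∂_{vⁱ} f`. -/
def Tpert (φ : ℝ × (Fin 3 → ℝ) → ℝ) (f : Pt → ℝ) (p : Pt) : ℝ :=
  Tfree f p -
    ∑ i, (TphiFn φ p * p.2.2 i + Dphi φ ((0 : ℝ), Pi.single i 1) (p.1, p.2.1)) * Vop i f p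

/-- Generalized translation `𝐞_d f = ∂_d f − (∂_d φ) · vⁱ ∂_{vⁱ} f` (spacetime direction `d`). -/
def eop (φ : ℝ × (Fin 3 → ℝ) → ℝ) (d : ℝ × (Fin 3 → ℝ)) (f : Pt → ℝ) (p : Pt) : ℝ :=
  fderiv ℝ f p (d.1, d.2, (0 : Fin 3 → ℝ)) - Dphi φ d (p.1, p.2.1) * Wop f p

/-- The coordinate direction `∂_{x^μ}`, `μ ∈ {0,1,2,3}`, with `x⁰ = t`. -/
def dir4 (μ : Fin 4) : ℝ × (Fin 3 → ℝ) :=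
  if _h : (μ : ℕ) = 0 then ((1 : ℝ), (0 : Fin 3 → ℝ))
  else ((0 : ℝ), Pi.single (⟨(μ : ℕ) - 1, by have := μ.isLt; omega⟩ : Fin 3) 1)

/-!
`𝐓_φ` is differentiation along the vector field `X = (v⁰, v, -(𝐓(φ) v + ∇ₓφ))` on phase space and
`V_i` is differentiation along the constant field `(0, 0, eᵢ)`. By the symmetry of second
derivatives, the commutator of two such derivations is differentiation along their Lie bracket,
which here is `-∂_{vⁱ} X = -(vⁱ/v⁰, eᵢ, -(∂_{vⁱ}𝐓(φ) v + 𝐓(φ) eᵢ))`. Since `φ` does not depend on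
`v`, `∂_{vⁱ}𝐓(φ) = (vⁱ/v⁰) ∂_tφ + ∂_{xⁱ}φ`, and the terms regroup into `𝐞_0 f`, `𝐞_i f` and
`𝐓(φ) V_i f`.
-/

lemma VectorField.lieBracket_const_right {𝕜 E : Type*} [NontriviallyNormedField 𝕜]
    [NormedAddCommGroup E] [NormedSpace 𝕜 E] (V : E → E) (u x : E) :
    VectorField.lieBracket 𝕜 V (fun _ => u) x = -fderiv 𝕜 V x u := by
  simp [VectorField.lieBracket]

namespace Pt

lemma eq_coord_sum (u : Pt) :
    u = u.1 • ((1 : ℝ), (0 : Fin 3 → ℝ), (0 : Fin 3 → ℝ))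
      + ∑ j, u.2.1 j • ((0 : ℝ), Pi.single j (1 : ℝ), (0 : Fin 3 → ℝ))
      + ∑ j, u.2.2 j • ((0 : ℝ), (0 : Fin 3 → ℝ), Pi.single j (1 : ℝ)) := by
  ext <;> simp [Prod.fst_sum, Prod.snd_sum, Finset.sum_apply, Pi.single_apply]

lemma clm_apply_eq_coord_sum (L : Pt →L[ℝ] ℝ) (u : Pt) :
    L u = u.1 * L ((1 : ℝ), (0 : Fin 3 → ℝ), (0 : Fin 3 → ℝ))
      + ∑ j, u.2.1 j * L ((0 : ℝ), Pi.single j 1, (0 : Fin 3 → ℝ))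
      + ∑ j, u.2.2 j * L ((0 : ℝ), (0 : Fin 3 → ℝ), Pi.single j 1) := by
  conv_lhs => rw [eq_coord_sum u]
  simp only [map_add, map_sum, map_smul, smul_eq_mul]

end Pt

def vdir (i : Fin 3) : Pt := ((0 : ℝ), (0 : Fin 3 → ℝ), Pi.single i 1)

lemma add_smul_vdir (p : Pt) (i : Fin 3) (s : ℝ) :
    p + s • vdir i = (p.1, p.2.1, p.2.2 + s • Pi.single i 1) := by
  ext <;> simp [vdir]

def transportField (φ : ℝ × (Fin 3 → ℝ) → ℝ) (p : Pt) : Pt :=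
  (vzero p.2.2, p.2.2,
    fun j => -(TphiFn φ p * p.2.2 j + Dphi φ ((0 : ℝ), Pi.single j 1) (p.1, p.2.1)))

lemma Tpert_eq_fderiv_transportField (φ : ℝ × (Fin 3 → ℝ) → ℝ) (f : Pt → ℝ) (p : Pt) :
    Tpert φ f p = fderiv ℝ f p (transportField φ p) := by
  rw [Pt.clm_apply_eq_coord_sum]
  simp only [Tpert, Tfree, Vop, transportField, neg_mul, Finset.sum_neg_distrib, sub_eq_add_neg]

lemma differentiable_vzero : Differentiable ℝ vzero :=
  (by fun_prop : Differentiable ℝ fun v : Fin 3 → ℝ => 1 + ∑ i, v i ^ 2).sqrt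
    fun v => by positivity

lemma hasDerivAt_vzero_add_smul (v w : Fin 3 → ℝ) :
    HasDerivAt (fun s : ℝ => vzero (v + s • w)) (v ⬝ᵥ w / vzero v) 0 := by
  have h : HasDerivAt (fun s : ℝ => 1 + ∑ j, (v j + s * w j) ^ 2) (∑ j, 2 * v j * w j) 0 := by
    refine (HasDerivAt.fun_sum fun j _ => ?_).const_add 1
    simpa using (((hasDerivAt_id (0 : ℝ)).mul_const (w j)).const_add (v j)).fun_pow 2
  convert h.sqrt (by positivity) using 1
  · simp [vzero]
  · simp only [vzero, dotProduct, zero_mul, add_zero, ← Finset.mul_sum, mul_assoc]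
    field_simp

lemma hasDerivAt_vzero_add_smul_single (v : Fin 3 → ℝ) (i : Fin 3) :
    HasDerivAt (fun s : ℝ => vzero (v + s • Pi.single i 1)) (v i / vzero v) 0 := by
  simpa [dotProduct_single] using hasDerivAt_vzero_add_smul v (Pi.single i 1)

lemma hasDerivAt_add_smul_apply {ι : Type*} (v w : ι → ℝ) (j : ι) :
    HasDerivAt (fun s : ℝ => (v + s • w) j) (w j) 0 := by
  simpa using ((hasDerivAt_id (0 : ℝ)).mul_const (w j)).const_add (v j)

lemma differentiable_Dphi {φ : ℝ × (Fin 3 → ℝ) → ℝ} (hφ : ContDiff ℝ 2 φ)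
    (d : ℝ × (Fin 3 → ℝ)) : Differentiable ℝ (Dphi φ d) :=
  ((hφ.fderiv_right (m := 1) le_rfl).clm_apply contDiff_const).differentiable one_ne_zero

lemma differentiable_transportField {φ : ℝ × (Fin 3 → ℝ) → ℝ} (hφ : ContDiff ℝ 2 φ) :
    Differentiable ℝ (transportField φ) := by
  have := differentiable_vzero
  have := differentiable_Dphi hφ
  unfold transportField TphiFn
  fun_prop

lemma hasLineDerivAt_TphiFn_vdir (φ : ℝ × (Fin 3 → ℝ) → ℝ) (p : Pt) (i : Fin 3) :
    HasLineDerivAt ℝ (TphiFn φ)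
      (p.2.2 i / vzero p.2.2 * Dphi φ ((1 : ℝ), (0 : Fin 3 → ℝ)) (p.1, p.2.1)
        + Dphi φ ((0 : ℝ), Pi.single i 1) (p.1, p.2.1)) p (vdir i) := by
  have hsum : Dphi φ ((0 : ℝ), Pi.single i 1) (p.1, p.2.1)
      = ∑ j, (Pi.single i 1 : Fin 3 → ℝ) j * Dphi φ ((0 : ℝ), Pi.single j 1) (p.1, p.2.1) := by
    simp [Pi.single_apply]
  change HasDerivAt (fun s => TphiFn φ (p + s • vdir i)) _ 0
  simp only [add_smul_vdir, TphiFn]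
  rw [hsum]
  exact ((hasDerivAt_vzero_add_smul_single p.2.2 i).mul_const _).add
    (HasDerivAt.fun_sum fun j _ =>
      (hasDerivAt_add_smul_apply p.2.2 (Pi.single i 1) j).mul_const _)

lemma hasLineDerivAt_transportField_vdir {φ : ℝ × (Fin 3 → ℝ) → ℝ} {p : Pt} {i : Fin 3}
    {T' : ℝ} (hT : HasLineDerivAt ℝ (TphiFn φ) T' p (vdir i)) :
    HasLineDerivAt ℝ (transportField φ)
      (p.2.2 i / vzero p.2.2, Pi.single i 1,
        fun j => -(T' * p.2.2 j + TphiFn φ p * (Pi.single i 1 : Fin 3 → ℝ) j)) p (vdir i) := by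
  have hvj := hasDerivAt_add_smul_apply p.2.2 (Pi.single i 1)
  change HasDerivAt (fun s => TphiFn φ (p + s • vdir i)) _ 0 at hT
  change HasDerivAt (fun s => transportField φ (p + s • vdir i)) _ 0
  simp only [add_smul_vdir, transportField] at hT ⊢
  refine (hasDerivAt_vzero_add_smul_single p.2.2 i).prodMk
    ((hasDerivAt_pi.2 hvj).prodMk (hasDerivAt_pi.2 fun j => ?_))
  exact ((hT.mul (hvj j)).add_const _).fun_neg.congr_deriv (by simp)

/-- Lemma 3.1, second identity: `[𝐓_φ, V_i] f = −(vⁱ/v⁰)·𝐞_0 f − 𝐞_i f + 𝐓(φ)·V_i f`. -/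
theorem commutator_Tpert_vertical
    (φ : ℝ × (Fin 3 → ℝ) → ℝ) (hφ : ContDiff ℝ (⊤ : ℕ∞) φ)
    (f : Pt → ℝ) (hf : ContDiff ℝ (⊤ : ℕ∞) f) (i : Fin 3) (p : Pt) :
    Tpert φ (Vop i f) p - Vop i (Tpert φ f) p =
      -(p.2.2 i / vzero p.2.2) * eop φ ((1 : ℝ), (0 : Fin 3 → ℝ)) f p
        - eop φ ((0 : ℝ), Pi.single i 1) f p
        + TphiFn φ p * Vop i f p := by
  have hX : DifferentiableAt ℝ (transportField φ) p :=
    differentiable_transportField (hφ.of_le (by norm_cast)) p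
  have hXvert := (hasLineDerivAt_transportField_vdir (hasLineDerivAt_TphiFn_vdir φ p i)).lineDeriv
  rw [hX.lineDeriv_eq_fderiv] at hXvert
  have hcomm := VectorField.fderiv_apply_lieBracket hf.contDiffAt
    (by rw [minSmoothness_of_isRCLikeNormedField]; exact WithTop.coe_le_coe.2 le_top)
    (differentiableAt_const (vdir i)) hX
  rw [VectorField.lieBracket_const_right, hXvert] at hcomm
  have hT : Tpert φ f = fun q => fderiv ℝ f q (transportField φ q) :=
    funext (Tpert_eq_fderiv_transportField φ f)
  rw [Tpert_eq_fderiv_transportField, hT]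
  change fderiv ℝ (fun q => fderiv ℝ f q (vdir i)) p _ - fderiv ℝ _ p (vdir i) = _
  rw [← hcomm, map_neg, Pt.clm_apply_eq_coord_sum]
  simp only [eop, Wop, Vop, Pi.single_apply, ite_mul, one_mul, zero_mul, mul_ite, mul_zero,
    Finset.sum_ite_eq', Finset.mem_univ, if_true, neg_mul, add_mul, Finset.sum_neg_distrib,
    Finset.sum_add_distrib, mul_assoc, ← Finset.mul_sum]
  ring
end
end

section
/- Mutual commutators of the basic vector fields (Lemma 3.2): for all indices α, β ∈ {0,1,2,3}, i, j ∈ {1,2,3} and every smooth f(t,x,v): (i) [𝐞_α, 𝐞_β] f = 0; (ii) [V_i, V_j] f = 0; (iii) [V_i, 𝐞_α] f = −(∂_{x^α}φ)·V_i f; (iv) [W, 𝐞_α] f = 0; (v) [V_i, W] f = V_i f. -/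
/-!
Each of `𝐞_d`, `V_i`, `W` is differentiation along a vector field on phase space: `V_i` along
the constant field `∂_{vⁱ}`, `W` along `(0, 0, v)`, and `𝐞_d` along `(d, 0) − (∂_d φ) (0, 0, v)`.
For `f` of class `C²`, the commutator of two such derivations is differentiation along the Lie
bracket of the fields, by symmetry of second derivatives. The brackets are then elementary; in
`[𝐞_a, 𝐞_b]` the correction terms cancel because `∂_a ∂_b φ = ∂_b ∂_a φ` and `∂_d φ` does not
depend on `v`.
-/

noncomputable section

section

open VectorField

variable {E F : Type*} [NormedAddCommGroup E] [NormedSpace ℝ E]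
  [NormedAddCommGroup F] [NormedSpace ℝ F]

theorem VectorField.lieBracket_const_const (u w x : E) :
    lieBracket ℝ (fun _ ↦ u) (fun _ ↦ w) x = 0 := by
  simp [lieBracket]

theorem VectorField.lieBracket_const_continuousLinearMap (u x : E) (L : E →L[ℝ] E) :
    lieBracket ℝ (fun _ ↦ u) L x = L u := by
  simp [lieBracket]

theorem ContDiff.fderiv_apply_comm {f : E → F} (hf : ContDiff ℝ 2 f) (x v w : E) :
    fderiv ℝ (fun y ↦ fderiv ℝ f y v) x w = fderiv ℝ (fun y ↦ fderiv ℝ f y w) x v := by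
  have h := fderiv_apply_lieBracket (x := x) (V := fun _ ↦ w) (W := fun _ ↦ v)
    hf.contDiffAt (by simp) (differentiableAt_const v) (differentiableAt_const w)
  rw [lieBracket_const_const, map_zero] at h
  exact sub_eq_zero.mp h.symm

theorem ContDiff.differentiable_fderiv_apply {f : E → F} (hf : ContDiff ℝ 2 f) (v : E) :
    Differentiable ℝ (fun y ↦ fderiv ℝ f y v) :=
  ((hf.fderiv_right (m := 1) (by norm_num)).clm_apply contDiff_const).differentiable one_ne_zero

end

section

open VectorField

def vertDir (i : Fin 3) : Pt := (0, 0, Pi.single i 1)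

def horizDir (d : ℝ × (Fin 3 → ℝ)) : Pt := (d.1, d.2, 0)

def spacetimeProj : Pt →L[ℝ] ℝ × (Fin 3 → ℝ) :=
  (ContinuousLinearMap.fst ℝ ℝ _).prod
    ((ContinuousLinearMap.fst ℝ _ _).comp (ContinuousLinearMap.snd ℝ ℝ _))

def velocityProj : Pt →L[ℝ] Pt :=
  (ContinuousLinearMap.inr ℝ ℝ _).comp ((ContinuousLinearMap.inr ℝ _ _).comp
    ((ContinuousLinearMap.snd ℝ _ _).comp (ContinuousLinearMap.snd ℝ ℝ _)))

theorem spacetimeProj_apply (p : Pt) : spacetimeProj p = (p.1, p.2.1) := rfl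

theorem velocityProj_apply (p : Pt) : velocityProj p = (0, 0, p.2.2) := rfl

theorem velocityProj_eq_sum (p : Pt) : velocityProj p = ∑ k, p.2.2 k • vertDir k := by
  ext <;> simp [velocityProj_apply, vertDir, Prod.fst_sum, Prod.snd_sum, Finset.sum_apply,
    Pi.single_apply]

def translationField (φ : ℝ × (Fin 3 → ℝ) → ℝ) (d : ℝ × (Fin 3 → ℝ)) (p : Pt) : Pt :=
  horizDir d - Dphi φ d (spacetimeProj p) • velocityProj p

theorem Vop_eq_fderiv (i : Fin 3) (g : Pt → ℝ) : Vop i g = fun p ↦ fderiv ℝ g p (vertDir i) :=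
  rfl

theorem Wop_eq_fderiv (g : Pt → ℝ) : Wop g = fun p ↦ fderiv ℝ g p (velocityProj p) := by
  ext p
  simp only [Wop, Vop_eq_fderiv, velocityProj_eq_sum, map_sum, map_smul, smul_eq_mul]

theorem eop_eq_fderiv (φ : ℝ × (Fin 3 → ℝ) → ℝ) (d : ℝ × (Fin 3 → ℝ)) (g : Pt → ℝ) :
    eop φ d g = fun p ↦ fderiv ℝ g p (translationField φ d p) := by
  ext p
  rw [translationField, map_sub, map_smul, smul_eq_mul, ← congrFun (Wop_eq_fderiv g) p]
  rfl

variable {φ : ℝ × (Fin 3 → ℝ) → ℝ}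

@[simp] theorem spacetimeProj_velocityProj (p : Pt) : spacetimeProj (velocityProj p) = 0 := rfl

@[simp] theorem velocityProj_velocityProj (p : Pt) :
    velocityProj (velocityProj p) = velocityProj p := rfl

@[simp] theorem velocityProj_vertDir (i : Fin 3) : velocityProj (vertDir i) = vertDir i := rfl

@[simp] theorem spacetimeProj_vertDir (i : Fin 3) : spacetimeProj (vertDir i) = 0 := rfl

@[simp] theorem spacetimeProj_translationField (d : ℝ × (Fin 3 → ℝ)) (p : Pt) :
    spacetimeProj (translationField φ d p) = d := by
  simp [translationField, horizDir, spacetimeProj_apply, velocityProj_apply]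

@[simp] theorem velocityProj_translationField (d : ℝ × (Fin 3 → ℝ)) (p : Pt) :
    velocityProj (translationField φ d p) = -Dphi φ d (spacetimeProj p) • velocityProj p := by
  simp [translationField, horizDir, velocityProj_apply]

theorem differentiable_translationField (hφ : ContDiff ℝ 2 φ) (d : ℝ × (Fin 3 → ℝ)) :
    Differentiable ℝ (translationField φ d) :=
  (differentiable_const _).sub
    (((hφ.differentiable_fderiv_apply d).comp spacetimeProj.differentiable).smul
      velocityProj.differentiable)

theorem fderiv_translationField_apply (hφ : ContDiff ℝ 2 φ) (d : ℝ × (Fin 3 → ℝ)) (p w : Pt) :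
    fderiv ℝ (translationField φ d) p w =
      -fderiv ℝ (Dphi φ d) (spacetimeProj p) (spacetimeProj w) • velocityProj p -
        Dphi φ d (spacetimeProj p) • velocityProj w := by
  have hD : Differentiable ℝ (Dphi φ d) := hφ.differentiable_fderiv_apply d
  have hc : DifferentiableAt ℝ (Dphi φ d ∘ spacetimeProj) p :=
    hD.differentiableAt.comp p spacetimeProj.differentiableAt
  have hc' : fderiv ℝ (Dphi φ d ∘ spacetimeProj) p =
      (fderiv ℝ (Dphi φ d) (spacetimeProj p)).comp spacetimeProj := by
    rw [fderiv_comp (g := Dphi φ d) p hD.differentiableAt spacetimeProj.differentiableAt,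
      spacetimeProj.fderiv]
  have hT : translationField φ d =
      fun q ↦ horizDir d - (Dphi φ d ∘ spacetimeProj) q • velocityProj q := rfl
  rw [hT, fderiv_const_sub, fderiv_fun_smul hc velocityProj.differentiableAt, hc',
    velocityProj.fderiv]
  simp only [neg_apply, add_apply, smul_apply, ContinuousLinearMap.smulRight_apply,
    ContinuousLinearMap.comp_apply, Function.comp_apply]
  module

theorem lieBracket_vertDir_translationField (hφ : ContDiff ℝ 2 φ) (i : Fin 3)
    (d : ℝ × (Fin 3 → ℝ)) (p : Pt) :
    lieBracket ℝ (fun _ ↦ vertDir i) (translationField φ d) p =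
      -Dphi φ d (spacetimeProj p) • vertDir i := by
  simp [lieBracket, fderiv_translationField_apply hφ]

theorem lieBracket_velocityProj_translationField (hφ : ContDiff ℝ 2 φ) (d : ℝ × (Fin 3 → ℝ))
    (p : Pt) : lieBracket ℝ velocityProj (translationField φ d) p = 0 := by
  simp [lieBracket, fderiv_translationField_apply hφ]

theorem lieBracket_translationField (hφ : ContDiff ℝ 2 φ) (a b : ℝ × (Fin 3 → ℝ)) (p : Pt) :
    lieBracket ℝ (translationField φ a) (translationField φ b) p = 0 := by
  have hsymm : fderiv ℝ (Dphi φ b) (spacetimeProj p) a =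
      fderiv ℝ (Dphi φ a) (spacetimeProj p) b :=
    hφ.fderiv_apply_comm _ b a
  simp only [lieBracket, fderiv_translationField_apply hφ, spacetimeProj_translationField,
    velocityProj_translationField, hsymm]
  module

end

open VectorField in
/-- Lemma 3.2: mutual commutators of the basic vector fields `𝐞_α`, `V_i`, `W`. -/
theorem mutual_commutators_basic_fields
    (φ : ℝ × (Fin 3 → ℝ) → ℝ) (hφ : ContDiff ℝ (⊤ : ℕ∞) φ)
    (f : Pt → ℝ) (hf : ContDiff ℝ (⊤ : ℕ∞) f)
    (α β : Fin 4) (i j : Fin 3) (p : Pt) :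
    (eop φ (dir4 α) (eop φ (dir4 β) f) p - eop φ (dir4 β) (eop φ (dir4 α) f) p = 0) ∧
    (Vop i (Vop j f) p - Vop j (Vop i f) p = 0) ∧
    (Vop i (eop φ (dir4 α) f) p - eop φ (dir4 α) (Vop i f) p
      = -(Dphi φ (dir4 α) (p.1, p.2.1)) * Vop i f p) ∧
    (Wop (eop φ (dir4 α) f) p - eop φ (dir4 α) (Wop f) p = 0) ∧
    (Vop i (Wop f) p - Wop (Vop i f) p = Vop i f p) := by
  have hφ2 : ContDiff ℝ 2 φ := hφ.of_le (WithTop.coe_le_coe.mpr le_top)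
  have hf2 : ContDiff ℝ 2 f := hf.of_le (WithTop.coe_le_coe.mpr le_top)
  have commutator {V W : Pt → Pt} (hV : Differentiable ℝ V) (hW : Differentiable ℝ W) :
      fderiv ℝ (fun q ↦ fderiv ℝ f q (W q)) p (V p) -
          fderiv ℝ (fun q ↦ fderiv ℝ f q (V q)) p (W p) = fderiv ℝ f p (lieBracket ℝ V W p) :=
    (fderiv_apply_lieBracket hf2.contDiffAt (by simp) (hW p) (hV p)).symm
  have hE := differentiable_translationField hφ2
  have hV (k : Fin 3) : Differentiable ℝ fun _ : Pt ↦ vertDir k := differentiable_const _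
  simp only [Vop_eq_fderiv, Wop_eq_fderiv, eop_eq_fderiv]
  refine ⟨?_, ?_, ?_, ?_, ?_⟩
  · rw [commutator (hE _) (hE _), lieBracket_translationField hφ2, map_zero]
  · rw [commutator (hV i) (hV j), lieBracket_const_const, map_zero]
  · rw [commutator (hV i) (hE _), lieBracket_vertDir_translationField hφ2, map_smul, smul_eq_mul,
      spacetimeProj_apply]
  · rw [commutator velocityProj.differentiable (hE _),
      lieBracket_velocityProj_translationField hφ2, map_zero]
  · rw [commutator (hV i) velocityProj.differentiable, lieBracket_const_continuousLinearMap,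
      velocityProj_vertDir]

end
end

section
/- Commutation of the boost weights with the perturbed transport operator (Lemma 3.4, boost case): fix i ∈ {1,2,3} and let w(t,x,v) = t vⁱ − xⁱ v⁰ (with v⁰ = √(1+|v|²)), which is the unnormalized weight associated to the Lorentz boost Z_i = t∂_{xⁱ} + xⁱ∂_t. Then at every point (t,x,v), 𝐓_φ(w) = −𝐓(φ)·w − ( t ∂_{xⁱ}φ + xⁱ ∂_t φ ), i.e. 𝐓_φ(Z_i^α v_α) = −𝐓(φ)·Z_i^α v_α − Z_i(φ). -/
noncomputable section

/-! The weight is annihilated by the free transport operator, since `t vⁱ − xⁱ v⁰` is constant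
along free straight-line motion. Only the force term survives: with `∂_{vʲ} w = t δᵢⱼ − xⁱ vʲ / v⁰`
and `Fʲ = 𝐓(φ) vʲ + ∂ⱼφ`, the mass shell `(v⁰)² = 1 + |v|²` together with the definition of
`𝐓(φ)` gives `Fʲ vⱼ = v⁰ (v⁰ 𝐓(φ) − ∂ₜφ)`, which turns `−Fʲ ∂_{vʲ} w` into the claimed right-hand
side. -/

lemma vzero_pos (v : Fin 3 → ℝ) : 0 < vzero v := Real.sqrt_pos.2 (by positivity)

lemma vzero_mul_self (v : Fin 3 → ℝ) : vzero v * vzero v = 1 + ∑ j, v j ^ 2 :=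
  Real.mul_self_sqrt (by positivity)

lemma hasFDerivAt_vzero (v : Fin 3 → ℝ) :
    HasFDerivAt vzero
      ((vzero v)⁻¹ • ∑ j, v j • (ContinuousLinearMap.proj j : (Fin 3 → ℝ) →L[ℝ] ℝ)) v := by
  have hsum : HasFDerivAt (fun u : Fin 3 → ℝ => 1 + ∑ j, u j ^ 2)
      (∑ j, (2 * v j) • (ContinuousLinearMap.proj j : (Fin 3 → ℝ) →L[ℝ] ℝ)) v := by
    refine (HasFDerivAt.fun_sum fun j _ => ?_).const_add 1
    simpa [mul_comm] using (hasFDerivAt_apply (𝕜 := ℝ) j v).pow 2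
  have hne : 1 + ∑ j, v j ^ 2 ≠ 0 := by positivity
  refine ((Real.hasDerivAt_sqrt hne).comp_hasFDerivAt v hsum).congr_fderiv ?_
  ext d
  simp only [smul_apply, sum_apply, ContinuousLinearMap.proj_apply, smul_eq_mul, Finset.mul_sum,
    vzero]
  refine Finset.sum_congr rfl fun j _ => ?_
  ring

def boostWeight (i : Fin 3) (q : Pt) : ℝ := q.1 * q.2.2 i - q.2.1 i * vzero q.2.2

lemma fderiv_boostWeight_apply (i : Fin 3) (p d : Pt) :
    fderiv ℝ (boostWeight i) p d =
      d.1 * p.2.2 i + p.1 * d.2.2 i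
        - (d.2.1 i * vzero p.2.2 + p.2.1 i * (∑ j, p.2.2 j * d.2.2 j) / vzero p.2.2) := by
  have hv : HasFDerivAt (fun q : Pt => q.2.2)
      ((ContinuousLinearMap.snd ℝ _ _).comp (ContinuousLinearMap.snd ℝ ℝ _)) p :=
    hasFDerivAt_snd.comp p hasFDerivAt_snd
  have hx : HasFDerivAt (fun q : Pt => q.2.1)
      ((ContinuousLinearMap.fst ℝ _ _).comp (ContinuousLinearMap.snd ℝ ℝ _)) p :=
    hasFDerivAt_fst.comp p hasFDerivAt_snd
  have hw : HasFDerivAt (boostWeight i) _ p :=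
    (hasFDerivAt_fst.fun_mul ((hasFDerivAt_apply i _).comp p hv)).fun_sub
      (((hasFDerivAt_apply i _).comp p hx).fun_mul ((hasFDerivAt_vzero _).comp p hv))
  rw [hw.fderiv]
  simp only [ContinuousLinearMap.smul_comp, sub_apply, add_apply, smul_apply, sum_apply,
    ContinuousLinearMap.comp_apply, ContinuousLinearMap.coe_snd', ContinuousLinearMap.coe_fst',
    ContinuousLinearMap.proj_apply, Function.comp_apply, smul_eq_mul]
  ring

lemma fderiv_boostWeight_time (i : Fin 3) (p : Pt) :
    fderiv ℝ (boostWeight i) p (1, 0, 0) = p.2.2 i := by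
  simp [fderiv_boostWeight_apply]

lemma fderiv_boostWeight_space (i j : Fin 3) (p : Pt) :
    fderiv ℝ (boostWeight i) p (0, Pi.single j 1, 0) =
      -((Pi.single j (1 : ℝ) : Fin 3 → ℝ) i * vzero p.2.2) := by
  simp [fderiv_boostWeight_apply]

lemma Vop_boostWeight (i j : Fin 3) (p : Pt) :
    Vop j (boostWeight i) p =
      p.1 * (Pi.single j (1 : ℝ) : Fin 3 → ℝ) i - p.2.1 i * p.2.2 j / vzero p.2.2 := by
  simp [Vop, fderiv_boostWeight_apply, Pi.single_apply]

lemma sum_mul_Vop_boostWeight (i : Fin 3) (p : Pt) (c : Fin 3 → ℝ) :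
    ∑ j, c j * Vop j (boostWeight i) p =
      p.1 * c i - p.2.1 i / vzero p.2.2 * ∑ j, c j * p.2.2 j := by
  simp only [Vop_boostWeight, Pi.single_apply, mul_ite, mul_one, mul_zero, mul_sub,
    Finset.sum_sub_distrib, Finset.sum_ite_eq, Finset.mem_univ, ↓reduceIte, Finset.mul_sum]
  rw [mul_comm]
  congr 1
  exact Finset.sum_congr rfl fun j _ => by ring

lemma Tfree_boostWeight (i : Fin 3) (p : Pt) : Tfree (boostWeight i) p = 0 := by
  simp only [Tfree, fderiv_boostWeight_time, fderiv_boostWeight_space, Pi.single_apply, ite_mul,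
    one_mul, zero_mul, mul_neg, mul_ite, mul_zero, Finset.sum_neg_distrib, Finset.sum_ite_eq,
    Finset.mem_univ, ↓reduceIte]
  ring

lemma sum_force_mul_velocity (φ : ℝ × (Fin 3 → ℝ) → ℝ) (p : Pt) :
    ∑ j, (TphiFn φ p * p.2.2 j + Dphi φ (0, Pi.single j 1) (p.1, p.2.1)) * p.2.2 j =
      vzero p.2.2 * (vzero p.2.2 * TphiFn φ p - Dphi φ (1, 0) (p.1, p.2.1)) := by
  have hT : ∑ j, p.2.2 j * Dphi φ (0, Pi.single j 1) (p.1, p.2.1) =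
      TphiFn φ p - vzero p.2.2 * Dphi φ (1, 0) (p.1, p.2.1) := by
    rw [TphiFn]; ring
  calc _ = TphiFn φ p * ∑ j, p.2.2 j ^ 2
        + ∑ j, p.2.2 j * Dphi φ (0, Pi.single j 1) (p.1, p.2.1) := by
        rw [Finset.mul_sum, ← Finset.sum_add_distrib]
        exact Finset.sum_congr rfl fun j _ => by ring
    _ = _ := by rw [hT]; linear_combination -TphiFn φ p * vzero_mul_self p.2.2

theorem Tpert_boost_weight_general
    (φ : ℝ × (Fin 3 → ℝ) → ℝ) (i : Fin 3) (p : Pt) :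
    Tpert φ (fun q => q.1 * q.2.2 i - q.2.1 i * vzero q.2.2) p =
      -TphiFn φ p * (p.1 * p.2.2 i - p.2.1 i * vzero p.2.2)
        - (p.1 * Dphi φ ((0 : ℝ), Pi.single i 1) (p.1, p.2.1)
            + p.2.1 i * Dphi φ ((1 : ℝ), (0 : Fin 3 → ℝ)) (p.1, p.2.1)) := by
  have hv0 := (vzero_pos p.2.2).ne'
  show Tpert φ (boostWeight i) p = _
  rw [Tpert, Tfree_boostWeight, sum_mul_Vop_boostWeight, sum_force_mul_velocity]
  field_simp
  ring

/-- Lemma 3.4, boost case: for the weight `w = t vⁱ − xⁱ v⁰` associated to the boost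
`Z_i = t∂_{xⁱ} + xⁱ∂_t`, one has `𝐓_φ(w) = −𝐓(φ)·w − Z_i(φ)`. -/
theorem Tpert_boost_weight
    (φ : ℝ × (Fin 3 → ℝ) → ℝ) (hφ : ContDiff ℝ (⊤ : ℕ∞) φ) (i : Fin 3) (p : Pt) :
    Tpert φ (fun q => q.1 * q.2.2 i - q.2.1 i * vzero q.2.2) p =
      -TphiFn φ p * (p.1 * p.2.2 i - p.2.1 i * vzero p.2.2)
        - (p.1 * Dphi φ ((0 : ℝ), Pi.single i 1) (p.1, p.2.1)
            + p.2.1 i * Dphi φ ((1 : ℝ), (0 : Fin 3 → ℝ)) (p.1, p.2.1)) :=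
  Tpert_boost_weight_general φ i p
end
end
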